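/- arXiv:2012.01402 — 2 statements merged into one kernel-verified Lean document; each statement's English description precedes it below -/
import Mathlib

section
/- The alternating product of two concatenation-closed languages is concatenation-closed. -/
/-!
Call `(u, v)` an alternating pair if `u # v ∈ L₁ ⋆ L₂`. Appending one more block `a # b ∈ L_c`
to an alternating pair `(u, v)` gives the alternating pair `(u a, b v)`: if `c` is
the colour of the last block, concatenation-closure of `L_c` merges `a # b` into that block,
otherwise `a # b` simply continues the alternation. Appending the blocks of `u₂ # v₂` one at a
time to `(u₁, v₁)` then yields `(u₁ u₂, v₂ v₁)`.
-/

def pairWord {A : Type*} (u v : List A) : List (Option A) :=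
  u.map some ++ none :: v.map some

/-- `L ⊆ A* # A*` is concatenation-closed if
`u₁ # v₁, u₂ # v₂ ∈ L` imply `u₁u₂ # v₂v₁ ∈ L`. -/
def ConcatClosed {A : Type*} (L : Set (List (Option A))) : Prop :=
  ∀ u₁ v₁ u₂ v₂ : List A, pairWord u₁ v₁ ∈ L → pairWord u₂ v₂ ∈ L →
    pairWord (u₁ ++ u₂) (v₂ ++ v₁) ∈ L

def AltProd {A : Type*} (L₁ L₂ : Set (List (Option A))) : Set (List (Option A)) :=
  { w | ∃ (k : ℕ) (u v : ℕ → List A) (X : ℕ → Bool),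
      (∀ n, X (n + 1) = !X n) ∧
      (∀ i < k, pairWord (u i) (v i) ∈ (if X i then L₁ else L₂)) ∧
      w = pairWord (((List.range k).map u).flatten)
            (((List.range k).reverse.map v).flatten) }

open List Function

section

variable {A : Type*}

theorem pairWord_inj {u v u' v' : List A} :
    pairWord u v = pairWord u' v' ↔ u = u' ∧ v = v' := by
  refine ⟨fun h => ?_, by rintro ⟨rfl, rfl⟩; rfl⟩
  induction u generalizing u' with
  | nil => cases u' <;> simp_all [pairWord, map_inj_right]
  | cons a u ih =>
    cases u' with
    | nil => simp [pairWord] at h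
    | cons a' u' =>
      simp only [pairWord, map_cons, cons_append, cons.injEq, Option.some.injEq] at h
      simpa [h.1] using ih h.2

theorem ConcatClosed.ite {L₁ L₂ : Set (List (Option A))} (h₁ : ConcatClosed L₁)
    (h₂ : ConcatClosed L₂) (c : Bool) : ConcatClosed (if c then L₁ else L₂) := by
  cases c <;> assumption

section Flatten

variable (U : ℕ → List A) (k : ℕ)

theorem flatten_map_range_succ :
    ((range (k + 1)).map U).flatten = ((range k).map U).flatten ++ U k := by
  simp [range_succ]

theorem flatten_map_reverse_range_succ :
    ((range (k + 1)).reverse.map U).flatten = U k ++ ((range k).reverse.map U).flatten := by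
  simp [range_succ]

theorem flatten_map_range_update (x : List A) :
    ((range k).map (update U k x)).flatten = ((range k).map U).flatten := by
  congr 1
  exact map_congr_left fun i hi => update_of_ne (mem_range.mp hi).ne _ _

theorem flatten_map_reverse_range_update (x : List A) :
    ((range k).reverse.map (update U k x)).flatten = ((range k).reverse.map U).flatten := by
  congr 1
  exact map_congr_left fun i hi => update_of_ne (mem_range.mp (mem_reverse.mp hi)).ne _ _

end Flatten

def IsAltProdPair (L₁ L₂ : Set (List (Option A))) (u v : List A) : Prop :=
  ∃ (k : ℕ) (U V : ℕ → List A) (X : ℕ → Bool),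
    (∀ n, X (n + 1) = !X n) ∧
    (∀ i < k, pairWord (U i) (V i) ∈ (if X i then L₁ else L₂)) ∧
    u = ((range k).map U).flatten ∧ v = ((range k).reverse.map V).flatten

variable {L₁ L₂ : Set (List (Option A))}

theorem pairWord_mem_altProd_iff {u v : List A} :
    pairWord u v ∈ AltProd L₁ L₂ ↔ IsAltProdPair L₁ L₂ u v := by
  simp only [AltProd, Set.mem_ofPred_eq, pairWord_inj, IsAltProdPair]

namespace IsAltProdPair

theorem single {a b : List A} {c : Bool} (hab : pairWord a b ∈ if c then L₁ else L₂) :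
    IsAltProdPair L₁ L₂ a b :=
  ⟨1, fun _ => a, fun _ => b, fun n => not^[n] c, fun n => iterate_succ_apply' _ n c,
    fun i hi => by simpa [Nat.lt_one_iff.mp hi] using hab, by simp, by simp⟩

theorem append_block (h₁ : ConcatClosed L₁) (h₂ : ConcatClosed L₂) {u v a b : List A}
    {c : Bool} (huv : IsAltProdPair L₁ L₂ u v) (hab : pairWord a b ∈ if c then L₁ else L₂) :
    IsAltProdPair L₁ L₂ (u ++ a) (b ++ v) := by
  obtain ⟨k, U, V, X, hX, hUV, rfl, rfl⟩ := huv
  rcases k with _ | m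
  · simpa using single hab
  by_cases hc : X m = c
  · refine ⟨m + 1, update U m (U m ++ a), update V m (b ++ V m), X, hX, fun i hi => ?_, ?_, ?_⟩
    · rcases eq_or_ne i m with rfl | hne
      · simpa using h₁.ite h₂ (X i) _ _ _ _ (hUV i hi) (hc ▸ hab)
      · simpa [hne] using hUV i hi
    · simp only [flatten_map_range_succ, flatten_map_range_update, update_self, append_assoc]
    · simp only [flatten_map_reverse_range_succ, flatten_map_reverse_range_update, update_self,
        append_assoc]
  · have hXc : X (m + 1) = c := by rw [hX m]; cases c <;> simpa using hc
    refine ⟨m + 1 + 1, update U (m + 1) a, update V (m + 1) b, X, hX, fun i hi => ?_, ?_, ?_⟩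
    · rcases eq_or_ne i (m + 1) with rfl | hne
      · simpa [hXc] using hab
      · simpa [hne] using hUV i (by omega)
    · rw [flatten_map_range_succ _ (m + 1), flatten_map_range_update, update_self]
    · rw [flatten_map_reverse_range_succ _ (m + 1), flatten_map_reverse_range_update,
        update_self]

theorem append (h₁ : ConcatClosed L₁) (h₂ : ConcatClosed L₂) {u₁ v₁ u₂ v₂ : List A}
    (h : IsAltProdPair L₁ L₂ u₁ v₁) (h' : IsAltProdPair L₁ L₂ u₂ v₂) :
    IsAltProdPair L₁ L₂ (u₁ ++ u₂) (v₂ ++ v₁) := by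
  obtain ⟨k, U, V, X, hX, hUV, rfl, rfl⟩ := h'
  induction k with
  | zero => simpa using h
  | succ k ih =>
    rw [flatten_map_range_succ, flatten_map_reverse_range_succ, ← append_assoc u₁,
      append_assoc (V k)]
    exact (ih fun i hi => hUV i (by omega)).append_block h₁ h₂ (hUV k (by omega))

end IsAltProdPair

end

/-- The alternating product of concatenation-closed languages is
concatenation-closed. -/
theorem altProd_concatClosed {A : Type*} (L₁ L₂ : Set (List (Option A)))
    (h₁ : ConcatClosed L₁) (h₂ : ConcatClosed L₂) :
    ConcatClosed (AltProd L₁ L₂) := by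
  intro u₁ v₁ u₂ v₂ hw₁ hw₂
  rw [pairWord_mem_altProd_iff] at hw₁ hw₂ ⊢
  exact hw₁.append h₁ h₂ hw₂
end

section
/- Let A = {x, y} and α = xy. In the monoid M with presentation ⟨x, y | xyyxxxyxxyyxxxy = xy⟩, both sides of the defining relation lie in αA* ∩ A*α, and factorizing over the suffix code Σ∗ = α(A* − A*αA*) yields the left pieces Σ = {xyx, xyyxx}; that is, xyyxxxyxxyyxxxy = (xyyxx)(xyx)(xyyxx)·xy and xy = xy, so the left monoid L(M) is presented by ⟨γ_1, γ_2 | γ_2 γ_1 γ_2 = 1⟩. -/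
def IsFactor {A : Type*} (α w : List A) : Prop :=
  ∃ x y : List A, w = x ++ α ++ y

def SigmaStar {A : Type*} (α : List A) : Set (List A) :=
  { w | ∃ t : List A, w = α ++ t ∧ ¬ IsFactor α t }

/-!
A factorisation `w₁ ⋯ wₖ · α` over `Σ∗ = α(A* − A*αA*)` is read off from the left: the first
piece `α t` must end exactly where the next occurrence of `α` starts. An occurrence starting
earlier would either lie inside `t`, which is excluded, or overlap the next `α` properly, which
is excluded when `α` is self-overlap free, as `xy` is. So the factorisation is unique, and it
suffices to exhibit one whose pieces lie in `Σ∗`.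
-/

section Factorisation

variable {A : Type*}

def SelfOverlapFree (α : List A) : Prop :=
  ∀ u, u <+: α → u <:+ α → u = [] ∨ u = α

theorem isFactor_iff_isInfix (α w : List A) : IsFactor α w ↔ α <:+: w :=
  ⟨fun ⟨x, y, h⟩ => ⟨x, y, h.symm⟩, fun ⟨x, y, h⟩ => ⟨x, y, h.symm⟩⟩

theorem ne_nil_of_mem_sigmaStar {α w : List A} (hw : w ∈ SigmaStar α) : α ≠ [] := by
  rintro rfl
  obtain ⟨t, -, ht⟩ := hw
  exact ht ⟨[], t, rfl⟩

theorem prefix_flatten_append_of_forall_mem_sigmaStar {α : List A} {l : List (List A)}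
    (hl : ∀ w ∈ l, w ∈ SigmaStar α) : α <+: l.flatten ++ α := by
  cases l with
  | nil => exact List.prefix_refl α
  | cons w l =>
    obtain ⟨t, rfl, -⟩ := hl w List.mem_cons_self
    exact ⟨t ++ l.flatten ++ α, by simp⟩

theorem SelfOverlapFree.eq_nil_or_prefix_of_prefix_append {α s β : List A}
    (hα : SelfOverlapFree α) (hsβ : α <+: s ++ β) (hβ : α <+: β) : s = [] ∨ α <+: s := by
  rcases le_or_gt α.length s.length with hle | hlt
  · exact .inr (List.prefix_of_prefix_length_le hsβ (List.prefix_append s β) hle)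
  obtain ⟨γ, rfl⟩ := List.prefix_of_prefix_length_le (List.prefix_append s β) hsβ hlt.le
  have hγβ : γ <+: β := (List.prefix_append_right_inj s).1 hsβ
  have hγ : γ <+: s ++ γ := List.prefix_of_prefix_length_le hγβ hβ (by simp)
  rcases hα γ hγ (List.suffix_append s γ) with rfl | hγs
  · simp at hlt
  · exact .inl (by simpa using congrArg List.length hγs)

theorem SelfOverlapFree.eq_nil_of_not_isFactor {α t s β : List A} (hα : SelfOverlapFree α)
    (hts : ¬ IsFactor α (t ++ s)) (hsβ : α <+: s ++ β) (hβ : α <+: β) : s = [] := by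
  rcases hα.eq_nil_or_prefix_of_prefix_append hsβ hβ with hs | ⟨r, rfl⟩
  · exact hs
  · exact absurd ⟨t, r, by simp⟩ hts

theorem SelfOverlapFree.eq_and_eq_of_mem_sigmaStar {α w w' R R' : List A}
    (hα : SelfOverlapFree α) (hw : w ∈ SigmaStar α) (hw' : w' ∈ SigmaStar α)
    (hR : α <+: R) (hR' : α <+: R') (h : w ++ R = w' ++ R') : w = w' ∧ R = R' := by
  obtain ⟨t, rfl, ht⟩ := hw
  obtain ⟨t', rfl, ht'⟩ := hw'
  simp only [List.append_assoc, List.append_cancel_left_eq] at h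
  rcases List.append_eq_append_iff.1 h with ⟨s, rfl, rfl⟩ | ⟨s, rfl, rfl⟩
  · obtain rfl := hα.eq_nil_of_not_isFactor ht' hR hR'
    simp
  · obtain rfl := hα.eq_nil_of_not_isFactor ht hR' hR
    simp

theorem eq_nil_of_flatten_append_eq_self {α : List A} {l : List (List A)}
    (hl : ∀ w ∈ l, w ∈ SigmaStar α) (h : l.flatten ++ α = α) : l = [] := by
  cases l with
  | nil => rfl
  | cons w l =>
    have hα := ne_nil_of_mem_sigmaStar (hl w List.mem_cons_self)
    obtain ⟨t, rfl, -⟩ := hl w List.mem_cons_self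
    have := congrArg List.length h
    simp only [List.flatten_cons, List.length_append] at this
    exact absurd (List.length_eq_zero_iff.1 (by omega)) hα

theorem SelfOverlapFree.eq_of_flatten_append_eq {α : List A} (hα : SelfOverlapFree α)
    {l l' : List (List A)} (hl : ∀ w ∈ l, w ∈ SigmaStar α) (hl' : ∀ w ∈ l', w ∈ SigmaStar α)
    (h : l.flatten ++ α = l'.flatten ++ α) : l = l' := by
  induction l generalizing l' with
  | nil => exact (eq_nil_of_flatten_append_eq_self hl' h.symm).symm
  | cons w l ih =>
    cases l' with
    | nil => exact eq_nil_of_flatten_append_eq_self hl h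
    | cons w' l' =>
      have htail (v) (hv : v ∈ l) : v ∈ SigmaStar α := hl v (.tail _ hv)
      have htail' (v) (hv : v ∈ l') : v ∈ SigmaStar α := hl' v (.tail _ hv)
      simp only [List.flatten_cons, List.append_assoc] at h
      obtain ⟨rfl, hrest⟩ := hα.eq_and_eq_of_mem_sigmaStar (hl w List.mem_cons_self)
        (hl' w' List.mem_cons_self) (prefix_flatten_append_of_forall_mem_sigmaStar htail)
        (prefix_flatten_append_of_forall_mem_sigmaStar htail') h
      rw [ih htail htail' hrest]

end Factorisation

theorem selfOverlapFree_zero_one : SelfOverlapFree ([0, 1] : List (Fin 2)) := by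
  intro u hpre hsuf
  rw [← List.mem_inits] at hpre
  simp only [List.inits, List.map_cons, List.map_nil, List.mem_cons, List.not_mem_nil,
    or_false] at hpre
  rcases hpre with rfl | rfl | rfl
  · exact .inl rfl
  · exact absurd hsuf (by decide)
  · exact .inr rfl

/-- With `x := 0`, `y := 1`, `α := xy`: in `⟨x, y | xyyxxxyxxyyxxxy = xy⟩`, both
sides of the defining relation begin and end with `α`; factorising over the
suffix code `Σ∗ = α(A* − A*αA*)` yields left pieces `Σ = {xyx, xyyxx}`, the
left-hand side factoring (uniquely) as `(xyyxx)(xyx)(xyyxx)·xy` and the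
right-hand side as the empty product times `xy`, so the left monoid `L(M)` is
presented by `⟨γ₁, γ₂ | γ₂γ₁γ₂ = 1⟩` (coding `xyx ↦ γ₁ := 0`, `xyyxx ↦ γ₂ := 1`). -/
theorem compression_example :
    let x : Fin 2 := 0
    let y : Fin 2 := 1
    let α : List (Fin 2) := [x, y]
    let lhs : List (Fin 2) := [x, y, y, x, x, x, y, x, x, y, y, x, x, x, y]
    let rhs : List (Fin 2) := [x, y]
    let p₁ : List (Fin 2) := [x, y, x]
    let p₂ : List (Fin 2) := [x, y, y, x, x]
    (α <+: lhs) ∧ (α <:+ lhs) ∧ (α <+: rhs) ∧ (α <:+ rhs) ∧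
    lhs = p₂ ++ p₁ ++ p₂ ++ α ∧ rhs = α ∧
    p₁ ∈ SigmaStar α ∧ p₂ ∈ SigmaStar α ∧
    (∀ l : List (List (Fin 2)), (∀ w ∈ l, w ∈ SigmaStar α) →
      l.flatten ++ α = lhs → l = [p₂, p₁, p₂]) ∧
    (∀ l : List (List (Fin 2)), (∀ w ∈ l, w ∈ SigmaStar α) →
      l.flatten ++ α = rhs → l = []) ∧
    ([p₂, p₁, p₂].map fun w => if w = p₁ then (0 : Fin 2) else 1) = [1, 0, 1] := by
  intro x y α lhs rhs p₁ p₂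
  have hp₁ : p₁ ∈ SigmaStar α := ⟨[x], rfl, by rw [isFactor_iff_isInfix]; decide⟩
  have hp₂ : p₂ ∈ SigmaStar α := ⟨[y, x, x], rfl, by rw [isFactor_iff_isInfix]; decide⟩
  have hpieces : ∀ w ∈ [p₂, p₁, p₂], w ∈ SigmaStar α := by
    simp only [List.mem_cons, List.not_mem_nil, or_false]
    rintro w (rfl | rfl | rfl) <;> assumption
  refine ⟨⟨[y, x, x, x, y, x, x, y, y, x, x, x, y], rfl⟩,
    ⟨[x, y, y, x, x, x, y, x, x, y, y, x, x], rfl⟩, List.prefix_refl α, List.suffix_refl α,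
    rfl, rfl, hp₁, hp₂, ?_, fun l hl h => eq_nil_of_flatten_append_eq_self hl h, rfl⟩
  intro l hl h
  exact selfOverlapFree_zero_one.eq_of_flatten_append_eq hl hpieces h
end
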